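/- arXiv:2410.21334 — 4 statements merged into one kernel-verified Lean document; each statement's English description precedes it below -/
import Mathlib

section
/- Let $n \ge 3$ and let $X$ be a connected graph on $n$ vertices. Then the connectivity of $\mathrm{FS}(X, K_n)$ equals its minimum degree, namely $|E(X)|$. -/
/-!
`FS(X, Kₙ)` is the Cayley graph of `Sym(n)` with respect to the transpositions `(i j)` with
`ij ∈ E(X)`; it is `|E(X)|`-regular, and for `n ≥ 3` deleting the neighbours of `1` cuts `1` off
from a 3-cycle. For the lower bound we use Mader's atoms: among the sets `A` such that `A` and the
complement of `A ∪ N(A)` are nonempty, the fragments minimise `|N(A)|` and the atoms are the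
smallest fragments. Submodularity of `A ↦ |A ∪ N(A)|` shows that distinct atoms are disjoint,
so, left translations being automorphisms, the atom `H` through `1` is a subgroup; by
minimality it is generated by the edge transpositions it contains, hence its orbits on `[n]` are
the components of a subgraph of `X`. Consequently, for distinct edge transpositions `t₁, t₂ ∉ H`
we have `t₁t₂ ∉ H`, so the cosets `Ht` with `t ∉ H` are disjoint subsets of `N(H)`. There is at
least one such `t` since `X` is connected, and counting gives `|N(H)| ≥ |E(X)|`.
-/

open SimpleGraph

/-- The friends-and-strangers graph `FS X Y` of two graphs on `Fin n`:
vertices are permutations of `Fin n`, and `σ, τ` are adjacent iff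
`τ = σ ∘ (i j)` for some edge `(i,j)` of `X` with `(σ i, σ j)` an edge of `Y`. -/
def FS {n : ℕ} (X Y : SimpleGraph (Fin n)) : SimpleGraph (Equiv.Perm (Fin n)) :=
  SimpleGraph.fromRel (fun σ τ => ∃ i j : Fin n,
    X.Adj i j ∧ Y.Adj (σ i) (σ j) ∧ τ = σ * Equiv.swap i j)

/-- A graph is `k`-connected if removing any set of at most `k - 1` vertices
leaves the induced graph connected. -/
def KConnected {V : Type*} (G : SimpleGraph V) (k : ℕ) : Prop :=
  ∀ S : Set V, S.Finite → S.ncard < k → (G.induce (Sᶜ : Set V)).Connected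

/-- The connectivity of a graph: the largest `k` such that it is `k`-connected. -/
noncomputable def connectivity {V : Type*} (G : SimpleGraph V) : ℕ :=
  sSup {k | KConnected G k}

/-- There exist `k` internally vertex-disjoint paths between `u` and `v`:
paths sharing no vertices other than `u` and `v`. -/
def IntDisjPaths {V : Type*} (G : SimpleGraph V) (k : ℕ) (u v : V) : Prop :=
  ∃ P : Fin k → G.Path u v, ∀ i j : Fin k, i ≠ j →
    ∀ x : V, x ∈ (P i).1.support → x ∈ (P j).1.support → x = u ∨ x = v

/-- The star graph on `Fin n`, centered at the last vertex. -/
def starGraph (n : ℕ) : SimpleGraph (Fin n) :=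
  SimpleGraph.fromRel (fun _ j => j.val = n - 1)

open Finset

section Connectivity

variable {V : Type*} {G : SimpleGraph V}

lemma KConnected.mono {j k : ℕ} (h : KConnected G k) (hjk : j ≤ k) : KConnected G j :=
  fun S hS hSj => h S hS (hSj.trans_le hjk)

lemma connectivity_eq_of_kConnected {k : ℕ} (h : KConnected G k) (h' : ¬ KConnected G (k + 1)) :
    connectivity G = k :=
  IsGreatest.csSup_eq ⟨h, fun _ hj => not_lt.1 fun hkj => h' (hj.mono hkj)⟩

end Connectivity

namespace SimpleGraph

variable {V V' : Type*} [Fintype V] [DecidableEq V] [Fintype V'] [DecidableEq V']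
  (G : SimpleGraph V) {G' : SimpleGraph V'}

noncomputable def closedNbhd (A : Finset V) : Finset V := by
  classical exact {x | ∃ a ∈ A, a = x ∨ G.Adj a x}

noncomputable def vertexBoundary (A : Finset V) : Finset V := G.closedNbhd A \ A

def IsSeparable (A : Finset V) : Prop := A.Nonempty ∧ (G.closedNbhd A)ᶜ.Nonempty

def IsFragment (A : Finset V) : Prop :=
  G.IsSeparable A ∧ ∀ B, G.IsSeparable B → #(G.vertexBoundary A) ≤ #(G.vertexBoundary B)

def IsAtom (A : Finset V) : Prop := G.IsFragment A ∧ ∀ B, G.IsFragment B → #A ≤ #B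

variable {G} {A B : Finset V}

lemma mem_closedNbhd {x : V} : x ∈ G.closedNbhd A ↔ ∃ a ∈ A, a = x ∨ G.Adj a x := by
  simp [closedNbhd]

lemma subset_closedNbhd : A ⊆ G.closedNbhd A :=
  fun a ha => mem_closedNbhd.2 ⟨a, ha, Or.inl rfl⟩

lemma closedNbhd_mono (h : A ⊆ B) : G.closedNbhd A ⊆ G.closedNbhd B := by
  intro x hx
  obtain ⟨a, ha, hax⟩ := mem_closedNbhd.1 hx
  exact mem_closedNbhd.2 ⟨a, h ha, hax⟩

lemma closedNbhd_union : G.closedNbhd (A ∪ B) = G.closedNbhd A ∪ G.closedNbhd B := by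
  ext x
  simp only [mem_union, mem_closedNbhd, or_and_right, exists_or]

lemma mem_vertexBoundary {x : V} :
    x ∈ G.vertexBoundary A ↔ x ∉ A ∧ ∃ a ∈ A, G.Adj a x := by
  rw [vertexBoundary, mem_sdiff, mem_closedNbhd]
  constructor
  · rintro ⟨⟨a, ha, rfl | hax⟩, hx⟩
    exacts [absurd ha hx, ⟨hx, a, ha, hax⟩]
  · rintro ⟨hx, a, ha, hax⟩
    exact ⟨⟨a, ha, Or.inr hax⟩, hx⟩

lemma card_vertexBoundary_add_card : #(G.vertexBoundary A) + #A = #(G.closedNbhd A) :=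
  card_sdiff_add_card_eq_card subset_closedNbhd

lemma union_vertexBoundary : A ∪ G.vertexBoundary A = G.closedNbhd A :=
  union_sdiff_of_subset subset_closedNbhd

lemma IsSeparable.inter (hA : G.IsSeparable A) (hAB : (A ∩ B).Nonempty) :
    G.IsSeparable (A ∩ B) :=
  ⟨hAB, hA.2.mono (compl_subset_compl.2 (closedNbhd_mono inter_subset_left))⟩

lemma IsFragment.of_vertexBoundary_subset (hA : G.IsFragment A) (hB : G.IsSeparable B)
    (hBA : G.vertexBoundary B ⊆ G.vertexBoundary A) : G.IsFragment B :=
  ⟨hB, fun C hC => (card_le_card hBA).trans (hA.2 C hC)⟩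

lemma IsFragment.compl_closedNbhd (hA : G.IsFragment A) : G.IsFragment (G.closedNbhd A)ᶜ := by
  have hsub : G.vertexBoundary (G.closedNbhd A)ᶜ ⊆ G.vertexBoundary A := by
    intro x hx
    obtain ⟨hx, y, hy, hyx⟩ := mem_vertexBoundary.1 hx
    rw [mem_compl, not_not] at hx
    refine mem_sdiff.2 ⟨hx, fun hxA => mem_compl.1 hy ?_⟩
    exact mem_closedNbhd.2 ⟨x, hxA, Or.inr hyx.symm⟩
  obtain ⟨a, ha⟩ := hA.1.1
  refine hA.of_vertexBoundary_subset ⟨hA.1.2, a, ?_⟩ hsub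
  rw [mem_compl, ← union_vertexBoundary, mem_union, not_or, mem_compl, not_not]
  exact ⟨subset_closedNbhd ha, fun h => (mem_sdiff.1 (hsub h)).2 ha⟩

/-- Submodularity of `A ↦ #(closedNbhd A)` drives the case where `A ∪ B` is separable; in the
other case `closedNbhd A ∪ closedNbhd B` is everything, and the bound `#A ≤ #(closedNbhd B)ᶜ`
even makes the boundary of `A ∩ B` strictly smaller than that of `A`. -/
lemma IsFragment.inter (hA : G.IsFragment A) (hB : G.IsFragment B) (hAB : (A ∩ B).Nonempty)
    (hcard : #A ≤ #(G.closedNbhd B)ᶜ) : G.IsFragment (A ∩ B) := by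
  refine ⟨hA.1.inter hAB, fun C hC => le_trans ?_ (hA.2 C hC)⟩
  have hi := card_vertexBoundary_add_card (G := G) (A := A ∩ B)
  have hu := card_vertexBoundary_add_card (G := G) (A := A ∪ B)
  have ha := card_vertexBoundary_add_card (G := G) (A := A)
  have hb := card_vertexBoundary_add_card (G := G) (A := B)
  have hcl : #(G.closedNbhd (A ∩ B)) ≤ #(G.closedNbhd A ∩ G.closedNbhd B) :=
    card_le_card (subset_inter (closedNbhd_mono inter_subset_left)
      (closedNbhd_mono inter_subset_right))
  have h1 := card_union_add_card_inter A B
  have h2 := card_union_add_card_inter (G.closedNbhd A) (G.closedNbhd B)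
  rw [← closedNbhd_union] at h2
  by_cases hext : (G.closedNbhd (A ∪ B))ᶜ.Nonempty
  · have := hB.2 (A ∪ B) ⟨hA.1.1.mono subset_union_left, hext⟩
    omega
  · rw [not_nonempty_iff_eq_empty, compl_eq_empty_iff] at hext
    rw [hext, card_univ] at h2
    rw [card_compl] at hcard
    have := (card_le_univ (G.closedNbhd B))
    omega

lemma IsAtom.subset_of_inter_nonempty (hA : G.IsAtom A) (hB : G.IsFragment B)
    (hAB : (A ∩ B).Nonempty) : A ⊆ B := by
  have hfrag := hA.1.inter hB hAB (hA.2 _ hB.compl_closedNbhd)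
  rw [← inter_eq_left, eq_of_subset_of_card_le inter_subset_left (hA.2 _ hfrag)]

lemma IsAtom.eq_of_inter_nonempty (hA : G.IsAtom A) (hB : G.IsAtom B) (hAB : (A ∩ B).Nonempty) :
    A = B :=
  (hA.subset_of_inter_nonempty hB.1 hAB).antisymm
    (hB.subset_of_inter_nonempty hA.1 (inter_comm A B ▸ hAB))

lemma IsAtom.eq_of_subset {C : Finset V} (hA : G.IsAtom A) (hCA : C ⊆ A) (hC : C.Nonempty)
    (hclosed : ∀ x ∈ C, ∀ y ∈ A, G.Adj x y → y ∈ C) : C = A := by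
  have hsub : G.vertexBoundary C ⊆ G.vertexBoundary A := by
    intro y hy
    obtain ⟨hyC, x, hx, hxy⟩ := mem_vertexBoundary.1 hy
    exact mem_vertexBoundary.2 ⟨fun hyA => hyC (hclosed x hx y hyA hxy), x, hCA hx, hxy⟩
  have hext : (G.closedNbhd A)ᶜ ⊆ (G.closedNbhd C)ᶜ :=
    compl_subset_compl.2 (closedNbhd_mono hCA)
  have hfrag := hA.1.of_vertexBoundary_subset ⟨hC, hA.1.1.2.mono hext⟩ hsub
  exact eq_of_subset_of_card_le hCA (hA.2 C hfrag)

lemma exists_isAtom (h : ∃ A, G.IsSeparable A) : ∃ A, G.IsAtom A := by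
  classical
  obtain ⟨A₀, hA₀⟩ := h
  obtain ⟨F, hF, hFmin⟩ := exists_min_image ({A | G.IsSeparable A} : Finset (Finset V))
    (fun A => #(G.vertexBoundary A)) ⟨A₀, by simpa using hA₀⟩
  simp only [mem_filter, mem_univ, true_and] at hF hFmin
  obtain ⟨A, hA, hAmin⟩ := exists_min_image ({A | G.IsFragment A} : Finset (Finset V))
    card ⟨F, by simpa using ⟨hF, hFmin⟩⟩
  simp only [mem_filter, mem_univ, true_and] at hA hAmin
  exact ⟨A, hA, hAmin⟩

lemma closedNbhd_image (φ : G ≃g G') (A : Finset V) :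
    G'.closedNbhd (A.image φ) = (G.closedNbhd A).image φ := by
  ext y
  obtain ⟨x, rfl⟩ := φ.surjective y
  simp only [mem_closedNbhd, mem_image, φ.injective.eq_iff, exists_eq_right,
    exists_exists_and_eq_and, φ.map_adj_iff]

lemma vertexBoundary_image (φ : G ≃g G') (A : Finset V) :
    G'.vertexBoundary (A.image φ) = (G.vertexBoundary A).image φ := by
  rw [vertexBoundary, vertexBoundary, closedNbhd_image, image_sdiff _ _ φ.injective]

lemma IsSeparable.image (φ : G ≃g G') (hA : G.IsSeparable A) : G'.IsSeparable (A.image φ) := by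
  obtain ⟨v, hv⟩ := hA.2
  refine ⟨hA.1.image φ, φ v, ?_⟩
  rw [closedNbhd_image, mem_compl, φ.injective.mem_finset_image]
  exact mem_compl.1 hv

lemma IsFragment.image (φ : G ≃g G') (hA : G.IsFragment A) : G'.IsFragment (A.image φ) := by
  refine ⟨hA.1.image φ, fun B hB => ?_⟩
  have hB' : B = (B.image φ.symm).image φ := by simp [image_image, Function.comp_def]
  rw [hB', vertexBoundary_image, vertexBoundary_image, card_image_of_injective _ φ.injective,
    card_image_of_injective _ φ.injective]
  exact hA.2 _ (hB.image φ.symm)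

lemma IsAtom.image (φ : G ≃g G') (hA : G.IsAtom A) : G'.IsAtom (A.image φ) := by
  refine ⟨hA.1.image φ, fun B hB => ?_⟩
  have hB' : B = (B.image φ.symm).image φ := by simp [image_image, Function.comp_def]
  rw [hB', card_image_of_injective _ φ.injective, card_image_of_injective _ φ.injective]
  exact hA.2 _ (hB.image φ.symm)

lemma IsSeparable.not_kConnected (hA : G.IsSeparable A) :
    ¬ KConnected G (#(G.vertexBoundary A) + 1) := by
  intro h
  obtain ⟨a, ha⟩ := hA.1
  obtain ⟨v, hv⟩ := hA.2
  have hconn := h (G.vertexBoundary A : Set V) (finite_toSet _) (by simp)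
  have haS : a ∈ (↑(G.vertexBoundary A) : Set V)ᶜ := fun h => (mem_sdiff.1 h).2 ha
  have hvS : v ∈ (↑(G.vertexBoundary A) : Set V)ᶜ := fun h => mem_compl.1 hv (mem_sdiff.1 h).1
  have key (y : ↥(↑(G.vertexBoundary A) : Set V)ᶜ)
      (hy : (G.induce (↑(G.vertexBoundary A))ᶜ).Reachable ⟨a, haS⟩ y) : y.1 ∈ A := by
    rw [reachable_iff_reflTransGen] at hy
    induction hy with
    | refl => exact ha
    | tail _ hyz ih =>
      rename_i c _
      by_contra hc
      exact c.2 (mem_vertexBoundary.2 ⟨hc, _, ih, hyz⟩)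
  exact mem_compl.1 hv (subset_closedNbhd (key ⟨v, hvS⟩ (hconn.preconnected _ _)))

lemma IsFragment.kConnected (hA : G.IsFragment A) : KConnected G #(G.vertexBoundary A) := by
  classical
  intro S hS hcard
  rw [Set.ncard_eq_toFinset_card S hS] at hcard
  have hsmall : ∀ C, G.vertexBoundary C ⊆ hS.toFinset → ¬ G.IsSeparable C :=
    fun C hC hsep => (hA.2 C hsep).not_gt ((card_le_card hC).trans_lt hcard)
  obtain ⟨u, hu⟩ : ∃ u, u ∉ S := by
    by_contra! h
    exact hsmall A (fun x _ => hS.mem_toFinset.2 (h x)) hA.1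
  refine (connected_iff _).2 ⟨fun u v => ?_, ⟨⟨u, hu⟩⟩⟩
  by_contra huv
  let C : Finset V := {x | ∃ hx : x ∈ Sᶜ, (G.induce Sᶜ).Reachable u ⟨x, hx⟩}
  have hmemC {x : V} (hx : x ∈ Sᶜ) : x ∈ C ↔ (G.induce Sᶜ).Reachable u ⟨x, hx⟩ := by
    simp only [C, mem_filter, mem_univ, true_and]
    exact ⟨fun ⟨_, h⟩ => h, fun h => ⟨hx, h⟩⟩
  have hbdry : G.vertexBoundary C ⊆ hS.toFinset := by
    intro y hy
    obtain ⟨hyC, x, hxC, hxy⟩ := mem_vertexBoundary.1 hy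
    rw [hS.mem_toFinset]
    by_contra hyS
    obtain ⟨hxS, hx⟩ := mem_filter.1 hxC |>.2
    exact hyC ((hmemC hyS).2 (hx.trans (Adj.reachable (by exact hxy))))
  refine hsmall C hbdry ⟨⟨u, (hmemC u.2).2 .rfl⟩, v, ?_⟩
  rw [mem_compl, ← union_vertexBoundary, mem_union, not_or]
  exact ⟨fun hv => huv ((hmemC v.2).1 hv), fun hv => v.2 (hS.mem_toFinset.1 (hbdry hv))⟩

lemma IsFragment.connectivity_eq (hA : G.IsFragment A) :
    connectivity G = #(G.vertexBoundary A) :=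
  connectivity_eq_of_kConnected hA.kConnected hA.1.not_kConnected

end SimpleGraph

namespace SimpleGraph

variable {Γ : Type*} [Group Γ] [Fintype Γ] [DecidableEq Γ] {G : SimpleGraph Γ} {H : Finset Γ}

def mulLeftIso (hG : ∀ g a b, G.Adj (g * a) (g * b) ↔ G.Adj a b) (g : Γ) : G ≃g G :=
  ⟨Equiv.mulLeft g, hG g _ _⟩

lemma IsAtom.image_mul_left_eq (hG : ∀ g a b, G.Adj (g * a) (g * b) ↔ G.Adj a b)
    (hH : G.IsAtom H) (h1 : 1 ∈ H) {x : Γ} (hx : x ∈ H) : H.image (x * ·) = H :=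
  (hH.image (mulLeftIso hG x)).eq_of_inter_nonempty hH
    ⟨x, mem_inter.2 ⟨mem_image.2 ⟨1, h1, mul_one x⟩, hx⟩⟩

/-- Left translates of an atom are atoms, and distinct atoms are disjoint. -/
def IsAtom.subgroup (hG : ∀ g a b, G.Adj (g * a) (g * b) ↔ G.Adj a b) (hH : G.IsAtom H)
    (h1 : 1 ∈ H) : Subgroup Γ where
  carrier := H
  one_mem' := h1
  mul_mem' {x y} hx hy := hH.image_mul_left_eq hG h1 hx ▸ mem_image_of_mem _ hy
  inv_mem' {x} hx := by
    obtain ⟨y, hy, hxy⟩ := mem_image.1 ((hH.image_mul_left_eq hG h1 hx).symm ▸ h1 :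
      (1 : Γ) ∈ H.image (x * ·))
    rwa [← eq_inv_of_mul_eq_one_right hxy]

lemma exists_isAtom_one_mem (hG : ∀ g a b, G.Adj (g * a) (g * b) ↔ G.Adj a b)
    (h : ∃ A, G.IsSeparable A) : ∃ H, G.IsAtom H ∧ 1 ∈ H := by
  obtain ⟨A, hA⟩ := exists_isAtom h
  obtain ⟨a, ha⟩ := hA.1.1.1
  exact ⟨_, hA.image (mulLeftIso hG a⁻¹), mem_image.2 ⟨a, ha, inv_mul_cancel a⟩⟩

end SimpleGraph

section Transpositions

open Equiv Subgroup

variable {α : Type*} [DecidableEq α]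

lemma Equiv.Perm.swap_apply_mem_closure {S : Set (Perm α)} (hS : ∀ f ∈ S, f.IsSwap)
    {g : Perm α} (hg : g ∈ closure S) (x : α) : swap (g x) x ∈ closure S :=
  (swap_mem_closure_isSwap hS).2 ⟨⟨g, hg⟩, rfl⟩

lemma Equiv.Perm.swap_mem_closure_of_mul_mem {S : Set (Perm α)} (hS : ∀ f ∈ S, f.IsSwap)
    {a b c d : α} (hab : a ≠ b) (hne : swap a b ≠ swap c d)
    (h : swap a b * swap c d ∈ closure S) : swap a b ∈ closure S := by
  by_cases ha : a ≠ c ∧ a ≠ d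
  · have := swap_apply_mem_closure hS h a
    rwa [Perm.mul_apply, swap_apply_of_ne_of_ne ha.1 ha.2, swap_apply_left, swap_comm] at this
  · have hb : b ≠ c ∧ b ≠ d := by
      obtain rfl | rfl : a = c ∨ a = d := by tauto
      · exact ⟨hab.symm, fun hbd => hne (hbd ▸ rfl)⟩
      · exact ⟨fun hbc => hne (hbc ▸ swap_comm _ _), hab.symm⟩
    have := swap_apply_mem_closure hS h b
    rwa [Perm.mul_apply, swap_apply_of_ne_of_ne hb.1 hb.2, swap_apply_right] at this

lemma Equiv.swap_eq_swap_iff {a b c d : α} (hab : a ≠ b) :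
    swap a b = swap c d ↔ s(a, b) = s(c, d) := by
  refine ⟨fun h => ?_, fun h => ?_⟩
  · have hcd : swap c d a = b := h ▸ swap_apply_left a b
    rcases eq_or_ne a c with rfl | hac
    · rw [swap_apply_left] at hcd
      rw [hcd]
    rcases eq_or_ne a d with rfl | had
    · rw [swap_apply_right] at hcd
      rw [hcd, Sym2.eq_swap]
    · exact absurd (swap_apply_of_ne_of_ne hac had ▸ hcd) hab
  · rcases Sym2.eq_iff.1 h with ⟨rfl, rfl⟩ | ⟨rfl, rfl⟩
    exacts [rfl, swap_comm _ _]

def SimpleGraph.edgeSwaps (X : SimpleGraph α) : Set (Perm α) :=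
  {σ | ∃ i j, X.Adj i j ∧ σ = swap i j}

lemma SimpleGraph.one_notMem_edgeSwaps (X : SimpleGraph α) : 1 ∉ X.edgeSwaps :=
  fun ⟨_, _, hij, h⟩ => hij.ne (swap_eq_one_iff.1 h.symm)

lemma SimpleGraph.isSwap_of_mem_edgeSwaps_inter {X : SimpleGraph α} {S : Set (Perm α)} :
    ∀ f ∈ X.edgeSwaps ∩ S, f.IsSwap :=
  fun _ ⟨⟨i, j, hij, hf⟩, _⟩ => ⟨i, j, hij.ne, hf⟩

lemma SimpleGraph.Connected.closure_edgeSwaps_eq_top [Finite α] {X : SimpleGraph α}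
    (hX : X.Connected) : closure X.edgeSwaps = ⊤ := by
  have hswap (x y : α) (hxy : X.Reachable x y) : swap x y ∈ closure X.edgeSwaps := by
    rw [reachable_iff_reflTransGen] at hxy
    induction hxy with
    | refl => rw [swap_self]; exact one_mem _
    | tail _ hyz ih =>
      exact SubmonoidClass.swap_mem_trans _ ih (subset_closure ⟨_, _, hyz, rfl⟩)
  rw [eq_top_iff, ← Perm.closure_isSwap, closure_le]
  rintro σ ⟨x, y, -, rfl⟩
  exact hswap x y (hX.preconnected x y)

end Transpositions

namespace FS

open Equiv Subgroup

variable {n : ℕ} {X : SimpleGraph (Fin n)}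

lemma top_adj_iff {σ τ : Perm (Fin n)} :
    (FS X ⊤).Adj σ τ ↔ σ⁻¹ * τ ∈ X.edgeSwaps := by
  simp only [FS, fromRel_adj, top_adj, edgeSwaps, Set.mem_ofPred_eq]
  constructor
  · rintro ⟨-, ⟨i, j, hij, -, rfl⟩ | ⟨i, j, hij, -, rfl⟩⟩
    · exact ⟨i, j, hij, by group⟩
    · exact ⟨i, j, hij, by rw [mul_inv_rev, swap_inv, inv_mul_cancel_right]⟩
  · rintro ⟨i, j, hij, h⟩
    rw [inv_mul_eq_iff_eq_mul] at h
    subst h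
    exact ⟨fun h => hij.ne (swap_eq_one_iff.1 (mul_eq_left.1 h.symm)),
      Or.inl ⟨i, j, hij, σ.injective.ne hij.ne, rfl⟩⟩

lemma top_adj_mul_left (g σ τ : Perm (Fin n)) :
    (FS X ⊤).Adj (g * σ) (g * τ) ↔ (FS X ⊤).Adj σ τ := by
  simp only [top_adj_iff, mul_inv_rev, mul_assoc, inv_mul_cancel_left]

lemma mem_vertexBoundary_one {σ : Perm (Fin n)} :
    σ ∈ (FS X ⊤).vertexBoundary {1} ↔ σ ∈ X.edgeSwaps := by
  simp only [mem_vertexBoundary, mem_singleton, exists_eq_left, top_adj_iff, inv_one, one_mul]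
  exact and_iff_right_of_imp fun hσ h => X.one_notMem_edgeSwaps (h ▸ hσ)

lemma card_vertexBoundary_one [DecidableRel X.Adj] :
    #((FS X ⊤).vertexBoundary {1}) = #X.edgeFinset := by
  have : (FS X ⊤).vertexBoundary {1} = X.edgeFinset.image (Sym2.lift ⟨swap, swap_comm⟩) := by
    ext σ
    simp [mem_vertexBoundary_one, edgeSwaps, eq_comm, Sym2.exists]
  rw [this, card_image_of_injOn]
  intro e he f hf hef
  induction e using Sym2.inductionOn
  induction f using Sym2.inductionOn
  simp only [coe_edgeFinset, mem_edgeSet, Sym2.lift_mk] at he hf hef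
  exact (swap_eq_swap_iff he.ne).1 hef

lemma exists_mul_self_ne_one (hn : 3 ≤ n) : ∃ c : Perm (Fin n), c * c ≠ 1 := by
  let i₀ : Fin n := ⟨0, by omega⟩
  let i₁ : Fin n := ⟨1, by omega⟩
  let i₂ : Fin n := ⟨2, by omega⟩
  refine ⟨swap i₀ i₁ * swap i₁ i₂, fun h => ?_⟩
  have := congrArg (· i₀) h
  simp [i₀, i₁, i₂, swap_apply_def, Fin.ext_iff] at this

lemma isSeparable_one (hn : 3 ≤ n) : (FS X ⊤).IsSeparable {1} := by
  obtain ⟨c, hc⟩ := exists_mul_self_ne_one hn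
  refine ⟨singleton_nonempty 1, c, ?_⟩
  rw [mem_compl, ← union_vertexBoundary, mem_union, mem_singleton, mem_vertexBoundary_one]
  rintro (rfl | ⟨i, j, -, rfl⟩)
  exacts [hc (mul_one 1), hc (swap_mul_self i j)]

end FS

namespace SimpleGraph

open Equiv Subgroup FS

variable {n : ℕ} {X : SimpleGraph (Fin n)} {H : Finset (Perm (Fin n))}

lemma IsAtom.mem_closure_edgeSwaps_inter (hH : (FS X ⊤).IsAtom H) (h1 : 1 ∈ H)
    {σ : Perm (Fin n)} (hσ : σ ∈ H) : σ ∈ closure (X.edgeSwaps ∩ H) := by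
  classical
  let K := hH.subgroup top_adj_mul_left h1
  have hC := hH.eq_of_subset (filter_subset (· ∈ closure (X.edgeSwaps ∩ H)) H)
    ⟨1, mem_filter.2 ⟨h1, one_mem _⟩⟩ fun x hx y hy hxy => by
      obtain ⟨hxH, hx⟩ := mem_filter.1 hx
      have ht : x⁻¹ * y ∈ X.edgeSwaps ∩ H :=
        ⟨top_adj_iff.1 hxy, K.mul_mem (K.inv_mem hxH) hy⟩
      exact mem_filter.2 ⟨hy, mul_inv_cancel_left x y ▸ mul_mem hx (subset_closure ht)⟩
  exact (mem_filter.1 (hC ▸ hσ)).2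

lemma IsAtom.mul_notMem (hH : (FS X ⊤).IsAtom H) (h1 : 1 ∈ H) {t₁ t₂ : Perm (Fin n)}
    (ht₁ : t₁ ∈ X.edgeSwaps) (ht₁H : t₁ ∉ H) (ht₂ : t₂ ∈ X.edgeSwaps)
    (hne : t₁ ≠ t₂) :
    t₁ * t₂ ∉ H := by
  obtain ⟨a, b, hab, rfl⟩ := ht₁
  obtain ⟨c, d, -, rfl⟩ := ht₂
  intro h
  exact ht₁H <| (closure_le (hH.subgroup top_adj_mul_left h1)).2 Set.inter_subset_right <|
    Perm.swap_mem_closure_of_mul_mem isSwap_of_mem_edgeSwaps_inter hab.ne hne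
      (hH.mem_closure_edgeSwaps_inter h1 h)

lemma IsAtom.exists_edgeSwap_notMem (hX : X.Connected) (hH : (FS X ⊤).IsAtom H) (h1 : 1 ∈ H) :
    ∃ t ∈ X.edgeSwaps, t ∉ H := by
  by_contra! hsub
  obtain ⟨v, hv⟩ := hH.1.1.2
  have hle : closure X.edgeSwaps ≤ hH.subgroup top_adj_mul_left h1 := (closure_le _).2 hsub
  rw [hX.closure_edgeSwaps_eq_top, top_le_iff] at hle
  have hvH : v ∈ H := by
    show v ∈ hH.subgroup top_adj_mul_left h1
    rw [hle]; trivial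
  exact mem_compl.1 hv (subset_closedNbhd hvH)

lemma IsAtom.card_mul_card_le (hH : (FS X ⊤).IsAtom H) (h1 : 1 ∈ H) :
    #H * #((FS X ⊤).vertexBoundary {1} \ H) ≤ #((FS X ⊤).vertexBoundary H) := by
  let K := hH.subgroup top_adj_mul_left h1
  rw [← card_product]
  refine card_le_card_of_injOn (fun p => p.1 * p.2) ?_ ?_
  · rintro ⟨h, t⟩ hp
    obtain ⟨hh, ht⟩ := mem_product.1 hp
    obtain ⟨ht, htH⟩ := mem_sdiff.1 ht
    rw [mem_vertexBoundary_one] at ht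
    refine mem_vertexBoundary.2 ⟨fun hmem => htH ?_, h, hh, top_adj_iff.2 ?_⟩
    · have := K.mul_mem (K.inv_mem hh) hmem
      rwa [inv_mul_cancel_left] at this
    · rwa [inv_mul_cancel_left]
  · rintro ⟨h₁, t₁⟩ hp₁ ⟨h₂, t₂⟩ hp₂ heq
    obtain ⟨hh₁, ht₁⟩ := mem_product.1 hp₁
    obtain ⟨hh₂, ht₂⟩ := mem_product.1 hp₂
    obtain ⟨ht₁, -⟩ := mem_sdiff.1 ht₁
    obtain ⟨ht₂, ht₂H⟩ := mem_sdiff.1 ht₂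
    rw [mem_vertexBoundary_one] at ht₁ ht₂
    simp only at heq
    by_cases ht : t₁ = t₂
    · subst ht
      exact Prod.ext (mul_right_cancel heq) rfl
    have hinv : t₁⁻¹ = t₁ := by
      obtain ⟨i, j, -, rfl⟩ := ht₁
      exact swap_inv i j
    have hquot : h₂⁻¹ * h₁ = t₂ * t₁ := by
      rw [← hinv, inv_mul_eq_iff_eq_mul, ← mul_assoc, ← heq, mul_inv_cancel_right]
    exact (hH.mul_notMem h1 ht₂ ht₂H ht₁ (Ne.symm ht)
      (hquot ▸ K.mul_mem (K.inv_mem hh₂) hh₁)).elim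

lemma IsAtom.card_edgeFinset_le [DecidableRel X.Adj] (hX : X.Connected)
    (hH : (FS X ⊤).IsAtom H) (h1 : 1 ∈ H) :
    #X.edgeFinset ≤ #((FS X ⊤).vertexBoundary H) := by
  set T := (FS X ⊤).vertexBoundary {1}
  obtain ⟨t, ht, htH⟩ := hH.exists_edgeSwap_notMem hX h1
  have hD : 0 < #(T \ H) := card_pos.2 ⟨t, mem_sdiff.2 ⟨mem_vertexBoundary_one.2 ht, htH⟩⟩
  have hTH : #(T ∩ H) + 1 ≤ #H := by
    have h1T : 1 ∉ T ∩ H := fun h =>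
      X.one_notMem_edgeSwaps (mem_vertexBoundary_one.1 (mem_inter.1 h).1)
    rw [← card_insert_of_notMem h1T]
    exact card_le_card (insert_subset h1 inter_subset_right)
  calc #X.edgeFinset = #(T ∩ H) + #(T \ H) := by
        rw [card_inter_add_card_sdiff, card_vertexBoundary_one]
    _ ≤ #H * #(T \ H) := by nlinarith
    _ ≤ #((FS X ⊤).vertexBoundary H) := hH.card_mul_card_le h1

end SimpleGraph

/-- For `n ≥ 3` and connected `X`, the connectivity of `FS(X, Kₙ)` equals
its minimum degree, namely the number of edges of `X`. -/
theorem stmt_8 (n : ℕ) (hn : 3 ≤ n) (X : SimpleGraph (Fin n))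
    [DecidableRel X.Adj] (hX : X.Connected) :
    connectivity (FS X (⊤ : SimpleGraph (Fin n))) = X.edgeFinset.card := by
  have hsep := FS.isSeparable_one (X := X) hn
  obtain ⟨H, hH, h1⟩ := exists_isAtom_one_mem FS.top_adj_mul_left ⟨_, hsep⟩
  have hfrag : (FS X ⊤).IsFragment {1} := ⟨hsep, fun B hB =>
    (FS.card_vertexBoundary_one (X := X) ▸ hH.card_edgeFinset_le hX h1).trans (hH.1.2 B hB)⟩
  rw [hfrag.connectivity_eq, FS.card_vertexBoundary_one (X := X)]
end

section
/- Let $X$ and $Y$ be bipartite graphs on $n \ge 3$ vertices with bipartitions $V(X) = A_X \sqcup B_X$ and $V(Y) = A_Y \sqcup B_Y$. For a permutation $\sigma$, define $p(\sigma) = |\sigma(A_X) \cap A_Y| + (\mathrm{sgn}(\sigma)+1)/2$. If $\sigma$ and $\tau$ lie in the same connected component of $\mathrm{FS}(X,Y)$, then $p(\sigma) \equiv p(\tau) \pmod 2$. -/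
open SimpleGraph

theorem SimpleGraph.Reachable.eq_of_forall_adj {V β : Type*} {G : SimpleGraph V} {f : V → β}
    (hf : ∀ a b, G.Adj a b → f a = f b) {u v : V} (h : G.Reachable u v) : f u = f v := by
  obtain ⟨w⟩ := h
  induction w with
  | nil => rfl
  | cons hadj _ ih => exact (hf _ _ hadj).trans ih

open Equiv

theorem Set.ncard_image_swap_inter_zmod_two {α : Type*} [DecidableEq α] [Finite α]
    {S T : Set α} {a b : α} (hS : a ∈ S ↔ b ∉ S) (hT : a ∈ T ↔ b ∉ T) :
    ((swap a b '' S ∩ T).ncard : ZMod 2) = (S ∩ T).ncard + 1 := by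
  wlog haS : a ∈ S generalizing a b
  · rw [swap_comm]
    exact this (by tauto) (by tauto) (by tauto)
  rw [image_swap_of_mem_of_notMem haS (hS.mp haS), Set.sdiff_inter_right_comm]
  by_cases haT : a ∈ T
  · rw [Set.insert_inter_of_notMem (hT.mp haT),
      ← Set.ncard_sdiff_singleton_add_one (show a ∈ S ∩ T from ⟨haS, haT⟩)]
    push_cast
    rw [add_assoc, CharTwo.add_self_eq_zero, add_zero]
  · rw [Set.insert_inter_of_mem (by tauto), Set.sdiff_singleton_eq_self
        (by simp [haT, ne_of_mem_of_not_mem haS (hS.mp haS)]),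
      Set.ncard_insert_of_notMem (fun h => hS.mp haS h.1)]
    push_cast
    rfl

theorem Equiv.Perm.ite_sign_mul_swap {α : Type*} [DecidableEq α] [Fintype α] (σ : Perm α)
    {i j : α} (hij : i ≠ j) :
    (if sign (σ * swap i j) = 1 then 1 else 0 : ZMod 2) = (if sign σ = 1 then 1 else 0) + 1 := by
  rw [Perm.sign_mul, Perm.sign_swap hij, mul_neg_one]
  rcases Int.units_eq_one_or (Perm.sign σ) with h | h <;> simp [h]; decide

/-- The paper's `p(σ)`, reduced modulo 2. -/
noncomputable def bipartiteParity {α : Type*} [DecidableEq α] [Fintype α] (AX AY : Set α)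
    (σ : Perm α) : ZMod 2 :=
  (σ '' AX ∩ AY).ncard + if Perm.sign σ = 1 then 1 else 0

theorem bipartiteParity_mul_swap {α : Type*} [DecidableEq α] [Fintype α] {AX AY : Set α}
    {σ : Perm α} {i j : α} (hij : i ≠ j) (hX : i ∈ AX ↔ j ∉ AX) (hY : σ i ∈ AY ↔ σ j ∉ AY) :
    bipartiteParity AX AY (σ * swap i j) = bipartiteParity AX AY σ := by
  have hσX : σ i ∈ σ '' AX ↔ σ j ∉ σ '' AX := by
    simpa only [σ.injective.mem_set_image] using hX
  rw [bipartiteParity, bipartiteParity, σ.ite_sign_mul_swap hij, mul_swap_eq_swap_mul,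
    Perm.coe_mul, Set.image_comp, Set.ncard_image_swap_inter_zmod_two hσX hY,
    add_add_add_comm, CharTwo.add_self_eq_zero, add_zero]

theorem FS.bipartiteParity_eq_of_adj {n : ℕ} {X Y : SimpleGraph (Fin n)} {AX AY : Set (Fin n)}
    (hX : ∀ i j, X.Adj i j → (i ∈ AX ↔ j ∉ AX)) (hY : ∀ i j, Y.Adj i j → (i ∈ AY ↔ j ∉ AY))
    {σ τ : Perm (Fin n)} (h : (FS X Y).Adj σ τ) :
    bipartiteParity AX AY σ = bipartiteParity AX AY τ := by
  rw [FS, fromRel_adj] at h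
  obtain ⟨-, ⟨i, j, hXij, hYij, rfl⟩ | ⟨i, j, hXij, hYij, rfl⟩⟩ := h
  · exact (bipartiteParity_mul_swap hXij.ne (hX i j hXij) (hY _ _ hYij)).symm
  · exact bipartiteParity_mul_swap hXij.ne (hX i j hXij) (hY _ _ hYij)

theorem stmt_13_general (n : ℕ) (X Y : SimpleGraph (Fin n))
    (AX AY : Set (Fin n))
    (hX : ∀ i j, X.Adj i j → (i ∈ AX ↔ j ∉ AX))
    (hY : ∀ i j, Y.Adj i j → (i ∈ AY ↔ j ∉ AY))
    (σ τ : Equiv.Perm (Fin n)) (h : (FS X Y).Reachable σ τ) :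
    ((⇑σ '' AX ∩ AY).ncard + (if Equiv.Perm.sign σ = 1 then 1 else 0)) % 2 =
    ((⇑τ '' AX ∩ AY).ncard + (if Equiv.Perm.sign τ = 1 then 1 else 0)) % 2 := by
  rw [← ZMod.natCast_eq_natCast_iff']
  push_cast
  exact h.eq_of_forall_adj fun _ _ => FS.bipartiteParity_eq_of_adj hX hY

/-- The parity invariant of `FS(X, Y)` for bipartite `X` and `Y`:
`p(σ) = |σ(A_X) ∩ A_Y| + (sgn σ + 1)/2` is constant modulo 2 on connected
components of `FS(X, Y)`. -/
theorem stmt_13 (n : ℕ) (hn : 3 ≤ n) (X Y : SimpleGraph (Fin n))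
    (AX AY : Set (Fin n))
    (hX : ∀ i j, X.Adj i j → (i ∈ AX ↔ j ∉ AX))
    (hY : ∀ i j, Y.Adj i j → (i ∈ AY ↔ j ∉ AY))
    (σ τ : Equiv.Perm (Fin n)) (h : (FS X Y).Reachable σ τ) :
    ((⇑σ '' AX ∩ AY).ncard + (if Equiv.Perm.sign σ = 1 then 1 else 0)) % 2 =
    ((⇑τ '' AX ∩ AY).ncard + (if Equiv.Perm.sign τ = 1 then 1 else 0)) % 2 :=
  stmt_13_general n X Y AX AY hX hY σ τ h
end

section
/- Let $X$ and $Y$ be bipartite graphs on $n \ge 3$ vertices. Then $\mathrm{FS}(X,Y)$ is disconnected. -/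
/-!
Encode a permutation `σ` by `p(σ) = sgn σ · (-1) ^ |{x ∈ A_X : σ x ∈ A_Y}|`. Along an edge of
`FS(X, Y)` the sign flips, and since the swapped vertices lie on opposite sides of both
bipartitions the count changes by exactly one, so `p` is constant on components. With
`n ≥ 3`, two vertices `a ≠ b` lie on the same side of `A_X`; then `swap a b` has the same count
as the identity but the opposite sign, so the two lie in different components.
-/

open SimpleGraph

open Equiv

theorem SimpleGraph.Reachable.apply_eq_of_forall_adj {V β : Type*} {G : SimpleGraph V}
    {f : V → β} (hf : ∀ u v, G.Adj u v → f u = f v) {u v : V} (h : G.Reachable u v) :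
    f u = f v := by
  rw [reachable_iff_reflTransGen] at h
  induction h with
  | refl => rfl
  | tail _ hadj ih => exact ih.trans (hf _ _ hadj)

theorem Fintype.exists_ne_mem_iff_mem {α : Type*} [Fintype α] (A : Set α)
    (h : 2 < Fintype.card α) : ∃ a b : α, a ≠ b ∧ (a ∈ A ↔ b ∈ A) := by
  obtain ⟨a, b, hab, hA⟩ := Fintype.exists_ne_map_eq_of_card_lt (fun x => x ∈ A) (by simpa)
  exact ⟨a, b, hab, Iff.of_eq hA⟩

theorem Fintype.sum_mul_comp_swap {α R : Type*} [Fintype α] [DecidableEq α] [CommRing R]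
    (f g : α → R) (i j : α) :
    ∑ x, f x * g (swap i j x) = ∑ x, f x * g x + (f i - f j) * (g j - g i) := by
  rcases eq_or_ne i j with rfl | hij
  · simp
  have hsupp : ∀ x, x ≠ i ∧ x ≠ j → f x * g (swap i j x) - f x * g x = 0 := fun x hx => by
    rw [swap_apply_of_ne_of_ne hx.1 hx.2, sub_self]
  rw [← sub_eq_iff_eq_add', ← Finset.sum_sub_distrib, Fintype.sum_eq_add i j hij hsupp,
    swap_apply_left, swap_apply_right]
  ring

section Indicator

variable {α : Type*} {A : Set α} {i j : α}

theorem Set.indicator_one_sub_indicator_one_eq_one (h : i ∈ A ↔ j ∉ A) :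
    A.indicator (1 : α → ZMod 2) i - A.indicator 1 j = 1 := by
  by_cases hi : i ∈ A
  · simp [hi, h.mp hi]
  · have hj : j ∈ A := by tauto
    simp only [hi, hj, not_false_eq_true, Set.indicator_of_notMem, Set.indicator_of_mem,
      Pi.one_apply]
    decide

theorem Set.indicator_one_sub_indicator_one_eq_zero (h : i ∈ A ↔ j ∈ A) :
    A.indicator (1 : α → ZMod 2) i - A.indicator 1 j = 0 := by
  by_cases hi : i ∈ A <;> simp [hi, h.mp, mt h.mpr]

end Indicator

section Parity

variable {n : ℕ} (AX AY : Set (Fin n))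

noncomputable def crossCount (σ : Perm (Fin n)) : ZMod 2 :=
  ∑ x, AX.indicator 1 x * AY.indicator 1 (σ x)

/-- The paper's invariant `p(σ) = |σ(A_X) ∩ A_Y| + (sgn σ + 1) / 2 (mod 2)`, written
multiplicatively as `(-1) ^ p(σ)` up to a global sign. -/
noncomputable def fsParity (σ : Perm (Fin n)) : ℤˣ :=
  Perm.sign σ * (-1) ^ crossCount AX AY σ

theorem crossCount_mul_swap (σ : Perm (Fin n)) (i j : Fin n) :
    crossCount AX AY (σ * swap i j) = crossCount AX AY σ +
      (AX.indicator 1 i - AX.indicator 1 j) * (AY.indicator 1 (σ j) - AY.indicator 1 (σ i)) :=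
  Fintype.sum_mul_comp_swap (AX.indicator 1) (fun x => AY.indicator 1 (σ x)) i j

variable {AX AY}

theorem fsParity_mul_swap_of_separated {σ : Perm (Fin n)} {i j : Fin n} (hij : i ≠ j)
    (hX : i ∈ AX ↔ j ∉ AX) (hY : σ i ∈ AY ↔ σ j ∉ AY) :
    fsParity AX AY (σ * swap i j) = fsParity AX AY σ := by
  have hY' : σ j ∈ AY ↔ σ i ∉ AY := by tauto
  rw [fsParity, fsParity, crossCount_mul_swap, Set.indicator_one_sub_indicator_one_eq_one hX,
    Set.indicator_one_sub_indicator_one_eq_one hY', Perm.sign_mul, Perm.sign_swap hij,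
    mul_one, uzpow_add, uzpow_one]
  simp

theorem fsParity_mul_swap_of_iff {σ : Perm (Fin n)} {a b : Fin n} (hab : a ≠ b)
    (hX : a ∈ AX ↔ b ∈ AX) :
    fsParity AX AY (σ * swap a b) = -fsParity AX AY σ := by
  rw [fsParity, fsParity, crossCount_mul_swap, Set.indicator_one_sub_indicator_one_eq_zero hX,
    zero_mul, add_zero, Perm.sign_mul, Perm.sign_swap hab]
  simp

theorem fsParity_eq_of_reachable {X Y : SimpleGraph (Fin n)}
    (hX : ∀ i j, X.Adj i j → (i ∈ AX ↔ j ∉ AX))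
    (hY : ∀ i j, Y.Adj i j → (i ∈ AY ↔ j ∉ AY))
    {σ τ : Perm (Fin n)} (h : (FS X Y).Reachable σ τ) :
    fsParity AX AY σ = fsParity AX AY τ := by
  have hstep : ∀ σ τ : Perm (Fin n), (∃ i j, X.Adj i j ∧ Y.Adj (σ i) (σ j) ∧
      τ = σ * swap i j) → fsParity AX AY σ = fsParity AX AY τ := by
    rintro σ _ ⟨i, j, hXij, hYij, rfl⟩
    exact (fsParity_mul_swap_of_separated hXij.ne (hX i j hXij) (hY _ _ hYij)).symm
  refine h.apply_eq_of_forall_adj fun σ τ hadj => ?_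
  rcases (fromRel_adj _ _ _).mp hadj with ⟨-, hστ | hτσ⟩
  · exact hstep σ τ hστ
  · exact (hstep τ σ hτσ).symm

end Parity

/-- If `X` and `Y` are bipartite graphs on `n ≥ 3` vertices, then `FS(X, Y)`
is disconnected. -/
theorem stmt_14 (n : ℕ) (hn : 3 ≤ n) (X Y : SimpleGraph (Fin n))
    (AX AY : Set (Fin n))
    (hX : ∀ i j, X.Adj i j → (i ∈ AX ↔ j ∉ AX))
    (hY : ∀ i j, Y.Adj i j → (i ∈ AY ↔ j ∉ AY)) :
    ¬ (FS X Y).Connected := by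
  intro hconn
  obtain ⟨a, b, hab, hA⟩ := Fintype.exists_ne_mem_iff_mem AX (by rw [Fintype.card_fin]; omega)
  have hparity := fsParity_eq_of_reachable (AY := AY) hX hY (hconn.preconnected 1 (swap a b))
  rw [← one_mul (swap a b), fsParity_mul_swap_of_iff hab hA] at hparity
  exact units_ne_neg_self _ hparity
end

section
/- Let $n \ge 3$ and let $X$ be any graph on $[n]$. Then for any permutation $\sigma$, the connected component of $\sigma$ in $\mathrm{FS}(X, \mathrm{Star}_n)$ has the same size as a connected component of $\mathrm{FS}(F, \mathrm{Star}_{|F|})$, where $F$ is the connected component of $X$ containing $\sigma^{-1}(n)$. -/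
open SimpleGraph

open Equiv
lemma extendDomain_swap {α β : Type*} [DecidableEq α] [DecidableEq β] {p : β → Prop}
    [DecidablePred p] (f : α ≃ Subtype p) (a b : α) :
    (Equiv.swap a b).extendDomain f = Equiv.swap (f a : β) (f b : β) := by
  ext x
  by_cases hx : p x
  · rw [Perm.extendDomain_apply_subtype _ f hx]
    rcases eq_or_ne (f.symm ⟨x, hx⟩) a with h | ha
    · have : x = (f a : β) := by rw [← h]; simp
      rw [h, swap_apply_left, this, swap_apply_left]
    rcases eq_or_ne (f.symm ⟨x, hx⟩) b with h | hb
    · have : x = (f b : β) := by rw [← h]; simp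
      rw [h, swap_apply_right, this, swap_apply_right]
    · rw [swap_apply_of_ne_of_ne ha hb, swap_apply_of_ne_of_ne, f.apply_symm_apply]
      · intro h; apply ha
        rw [show (⟨x, hx⟩ : Subtype p) = f a from Subtype.ext h]; simp
      · intro h; apply hb
        rw [show (⟨x, hx⟩ : Subtype p) = f b from Subtype.ext h]; simp
  · rw [Perm.extendDomain_apply_not_subtype _ f hx, swap_apply_of_ne_of_ne]
    · intro h; exact hx (h ▸ (f a).2)
    · intro h; exact hx (h ▸ (f b).2)

lemma FS_adj_iff {n : ℕ} (X Y : SimpleGraph (Fin n)) (a b : Equiv.Perm (Fin n)) :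
    (FS X Y).Adj a b ↔ a ≠ b ∧ ∃ i j : Fin n,
      X.Adj i j ∧ Y.Adj (a i) (a j) ∧ b = a * Equiv.swap i j := by
  rw [FS, fromRel_adj]
  constructor
  · rintro ⟨hne, h | h⟩
    · exact ⟨hne, h⟩
    · obtain ⟨i, j, hX, hY, hab⟩ := h
      refine ⟨hne, i, j, hX, ?_, ?_⟩
      · have hi : a i = b j := by rw [hab]; simp
        have hj : a j = b i := by rw [hab]; simp
        rw [hi, hj]; exact hY.symm
      · rw [hab, mul_assoc]; simp
  · rintro ⟨hne, h⟩; exact ⟨hne, Or.inl h⟩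

lemma starGraph_adj {n : ℕ} (a b : Fin n) :
    (_root_.starGraph n).Adj a b ↔ a ≠ b ∧ (b.val = n - 1 ∨ a.val = n - 1) := by
  rw [_root_.starGraph, fromRel_adj]

section
variable {n m : ℕ} (σ : Equiv.Perm (Fin n)) {S : Set (Fin n)} [DecidablePred (· ∈ S)]
  (e : S ≃ Fin m) (ρ0 : Equiv.Perm (Fin m))

/-- The lift of a permutation of `Fin m` to a permutation of `Fin n`. -/
def psi (ρ : Equiv.Perm (Fin m)) : Equiv.Perm (Fin n) :=
  σ * ((ρ0⁻¹ * ρ).extendDomain e.symm)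

lemma psi_apply_mem (ρ : Equiv.Perm (Fin m)) (p : Fin n) (hp : p ∈ S) :
    psi σ e ρ0 ρ p = σ (e.symm (ρ0⁻¹ (ρ (e ⟨p, hp⟩)))) := by
  simp only [psi, Equiv.Perm.mul_apply]
  rw [Equiv.Perm.extendDomain_apply_subtype _ e.symm hp]
  simp

lemma psi_apply_not_mem (ρ : Equiv.Perm (Fin m)) (p : Fin n) (hp : p ∉ S) :
    psi σ e ρ0 ρ p = σ p := by
  simp only [psi, Equiv.Perm.mul_apply]
  rw [Equiv.Perm.extendDomain_apply_not_subtype _ e.symm hp]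

lemma psi_rho0 : psi σ e ρ0 ρ0 = σ := by
  simp [psi, Equiv.Perm.extendDomain_one]

lemma psi_mul_swap (ρ : Equiv.Perm (Fin m)) (a b : Fin m) :
    psi σ e ρ0 (ρ * Equiv.swap a b)
      = psi σ e ρ0 ρ * Equiv.swap (e.symm a : Fin n) (e.symm b : Fin n) := by
  rw [psi, psi, ← mul_assoc ρ0⁻¹, ← Equiv.Perm.extendDomain_mul,
    extendDomain_swap, ← mul_assoc]

lemma psi_injective : Function.Injective (psi σ e ρ0) := by
  intro ρ ρ' h
  have := mul_left_cancel h
  have := Equiv.Perm.extendDomainHom_injective e.symm this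
  exact mul_left_cancel this

end

section
variable {n m : ℕ} (σ : Equiv.Perm (Fin n)) {S : Set (Fin n)} [DecidablePred (· ∈ S)]
  (e : S ≃ Fin m) (ρ0 : Equiv.Perm (Fin m)) (X : SimpleGraph (Fin n))
  (c0 : Fin n) (lm : Fin m) (hc0 : c0.val = n - 1) (hlm : lm.val = m - 1)
  (hs0 : σ⁻¹ c0 ∈ S) (hρ0 : ρ0 = Equiv.swap (e ⟨σ⁻¹ c0, hs0⟩) lm)
  (hS : S = (X.connectedComponentMk (σ⁻¹ c0)).supp)

include hs0 hρ0 in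
lemma psi_hole_iff (ρ : Equiv.Perm (Fin m)) (j : Fin n) (hj : j ∈ S) :
    psi σ e ρ0 ρ j = c0 ↔ ρ (e ⟨j, hj⟩) = lm := by
  rw [psi_apply_mem σ e ρ0 ρ j hj]
  constructor
  · intro h
    have h1 : (e.symm (ρ0⁻¹ (ρ (e ⟨j, hj⟩))) : Fin n) = σ⁻¹ c0 := by
      rw [← h]; simp
    have h2 : e.symm (ρ0⁻¹ (ρ (e ⟨j, hj⟩))) = ⟨σ⁻¹ c0, hs0⟩ := Subtype.ext h1
    have h3 : ρ0⁻¹ (ρ (e ⟨j, hj⟩)) = e ⟨σ⁻¹ c0, hs0⟩ := by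
      rw [← h2]; simp
    have h4 : ρ (e ⟨j, hj⟩) = ρ0 (e ⟨σ⁻¹ c0, hs0⟩) := by
      rw [← h3]; simp
    rw [h4, hρ0, swap_apply_left]
  · intro h
    rw [h, hρ0]
    simp

include hc0 hlm hρ0 in
lemma adj_psi {ρ ρ' : Equiv.Perm (Fin m)}
    (h : (FS ((X.induce S).map e.toEmbedding) (starGraph m)).Adj ρ ρ') :
    (FS X (starGraph n)).Adj (psi σ e ρ0 ρ) (psi σ e ρ0 ρ') := by
  rw [FS_adj_iff] at h ⊢
  obtain ⟨hne, a, b, hX', hstar, hρ'⟩ := h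
  rw [SimpleGraph.map_adj] at hX'
  obtain ⟨u, v, huv, ha, hb⟩ := hX'
  simp only [Equiv.coe_toEmbedding] at ha hb
  have hXuv : X.Adj ↑u ↑v := huv
  refine ⟨fun hh => hne (psi_injective σ e ρ0 hh), ↑u, ↑v, hXuv, ?_, ?_⟩
  · rw [_root_.starGraph_adj] at hstar ⊢
    refine ⟨fun hh => hXuv.ne ((psi σ e ρ0 ρ).injective hh), ?_⟩
    rcases hstar.2 with hv | hv
    · left
      have : ρ (e v) = lm := by rw [hb]; exact Fin.ext (hv.trans hlm.symm)
      have := (psi_hole_iff σ e ρ0 c0 lm hs0 hρ0 ρ ↑v v.2).mpr (by simpa using this)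
      rw [this, hc0]
    · right
      have : ρ (e u) = lm := by rw [ha]; exact Fin.ext (hv.trans hlm.symm)
      have := (psi_hole_iff σ e ρ0 c0 lm hs0 hρ0 ρ ↑u u.2).mpr (by simpa using this)
      rw [this, hc0]
  · rw [hρ', psi_mul_swap, ← ha, ← hb]
    simp

include hc0 hlm hρ0 hS in
lemma adj_psi_rev {ρ : Equiv.Perm (Fin m)} {τ : Equiv.Perm (Fin n)}
    (h : (FS X (starGraph n)).Adj (psi σ e ρ0 ρ) τ) :
    ∃ ρ' : Equiv.Perm (Fin m), τ = psi σ e ρ0 ρ' ∧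
      (FS ((X.induce S).map e.toEmbedding) (starGraph m)).Adj ρ ρ' := by
  rw [FS_adj_iff] at h
  obtain ⟨hne, i, j, hX, hstar, hτ⟩ := h
  rw [_root_.starGraph_adj] at hstar
  have key : ∀ i j : Fin n, X.Adj i j → (psi σ e ρ0 ρ j).val = n - 1 →
      τ = psi σ e ρ0 ρ * Equiv.swap i j → ∃ ρ' : Equiv.Perm (Fin m),
      τ = psi σ e ρ0 ρ' ∧
      (FS ((X.induce S).map e.toEmbedding) (starGraph m)).Adj ρ ρ' := by
    clear hτ hstar hX hne i j
    intro i j hX hval hτ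
    have hole : psi σ e ρ0 ρ j = c0 := Fin.ext (hval.trans hc0.symm)
    have hj : j ∈ S := by
      by_contra hj
      rw [psi_apply_not_mem σ e ρ0 ρ j hj] at hole
      have : j = σ⁻¹ c0 := by rw [← hole]; simp
      exact hj (this ▸ hs0)
    have hi : i ∈ S := by
      rw [hS] at hj ⊢
      rw [ConnectedComponent.mem_supp_iff] at hj ⊢
      rw [← hj]
      exact ConnectedComponent.connectedComponentMk_eq_of_adj hX
    refine ⟨ρ * Equiv.swap (e ⟨i, hi⟩) (e ⟨j, hj⟩), ?_, ?_⟩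
    · rw [hτ, psi_mul_swap]; simp
    · rw [FS_adj_iff]
      refine ⟨?_, e ⟨i, hi⟩, e ⟨j, hj⟩, ?_, ?_, rfl⟩
      · intro hh
        have := left_eq_mul.mp hh
        rw [swap_eq_one_iff] at this
        exact hX.ne (by simpa [Subtype.ext_iff] using e.injective this)
      · rw [SimpleGraph.map_adj]
        exact ⟨⟨i, hi⟩, ⟨j, hj⟩, hX, rfl, rfl⟩
      · rw [_root_.starGraph_adj]
        have hab : e ⟨i, hi⟩ ≠ e ⟨j, hj⟩ := fun hh =>
          hX.ne (by simpa [Subtype.ext_iff] using e.injective hh)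
        refine ⟨fun hh => hab (ρ.injective hh), Or.inl ?_⟩
        rw [(psi_hole_iff σ e ρ0 c0 lm hs0 hρ0 ρ j hj).mp hole, hlm]
  rcases hstar.2 with hv | hv
  · exact key i j hX hv hτ
  · exact key j i hX.symm hv (by rwa [swap_comm] at hτ)

include hc0 hlm hρ0 in
lemma reachable_psi {ρ ρ' : Equiv.Perm (Fin m)}
    (h : (FS ((X.induce S).map e.toEmbedding) (starGraph m)).Reachable ρ ρ') :
    (FS X (starGraph n)).Reachable (psi σ e ρ0 ρ) (psi σ e ρ0 ρ') := by
  obtain ⟨w⟩ := h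
  induction w with
  | nil => exact .refl _
  | cons h w ih =>
    exact (adj_psi σ e ρ0 X c0 lm hc0 hlm hs0 hρ0 h).reachable.trans ih

include hc0 hlm hρ0 hS in
lemma walk_psi_rev {s τ : Equiv.Perm (Fin n)} (w : (FS X (starGraph n)).Walk s τ) :
    ∀ ρ : Equiv.Perm (Fin m), s = psi σ e ρ0 ρ →
    ∃ ρ', τ = psi σ e ρ0 ρ' ∧
      (FS ((X.induce S).map e.toEmbedding) (starGraph m)).Reachable ρ ρ' := by
  induction w with
  | nil => exact fun ρ h => ⟨ρ, h, .refl ρ⟩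
  | cons h w ih =>
    intro ρ hs
    subst hs
    obtain ⟨ρ1, hρ1, hadj⟩ := adj_psi_rev σ e ρ0 X c0 lm hc0 hlm hs0 hρ0 hS h
    obtain ⟨ρ', hτ, hr⟩ := ih ρ1 hρ1
    exact ⟨ρ', hτ, hadj.reachable.trans hr⟩

end

/-- The connected component of `σ` in `FS(X, Starₙ)` has the same size as a
connected component of `FS(F, Star_{|F|})`, where `F` is the connected
component of `X` containing `σ⁻¹(n)` (the position of the hole). -/
theorem stmt_15 (n : ℕ) (hn : 3 ≤ n) (X : SimpleGraph (Fin n))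
    (σ : Equiv.Perm (Fin n)) (m : ℕ) (S : Set (Fin n))
    (hS : S = (X.connectedComponentMk (σ⁻¹ ⟨n - 1, by omega⟩)).supp)
    (e : S ≃ Fin m) :
    ∃ c : (FS ((X.induce S).map e.toEmbedding) (starGraph m)).ConnectedComponent,
      ((FS X (starGraph n)).connectedComponentMk σ).supp.ncard = c.supp.ncard := by
  classical
  set c0 : Fin n := ⟨n - 1, by omega⟩ with hc0def
  have hS' : S = (X.connectedComponentMk (σ⁻¹ c0)).supp := hS
  have hs0 : σ⁻¹ c0 ∈ S := by
    rw [hS', ConnectedComponent.mem_supp_iff]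
  have hm : 0 < m := (e ⟨σ⁻¹ c0, hs0⟩).pos
  set lm : Fin m := ⟨m - 1, by omega⟩ with hlmdef
  set ρ0 : Equiv.Perm (Fin m) := Equiv.swap (e ⟨σ⁻¹ c0, hs0⟩) lm with hρ0
  have hc0 : c0.val = n - 1 := rfl
  have hlm : lm.val = m - 1 := rfl
  refine ⟨(FS ((X.induce S).map e.toEmbedding) (starGraph m)).connectedComponentMk ρ0, ?_⟩
  have himg : ((FS X (starGraph n)).connectedComponentMk σ).supp
      = psi σ e ρ0 ''
        (((FS ((X.induce S).map e.toEmbedding) (starGraph m)).connectedComponentMk ρ0).supp) := by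
    ext τ
    simp only [Set.mem_image, ConnectedComponent.mem_supp_iff]
    constructor
    · intro h
      have hr : (FS X (starGraph n)).Reachable (psi σ e ρ0 ρ0) τ := by
        rw [psi_rho0]
        exact (ConnectedComponent.eq.mp h).symm
      obtain ⟨w⟩ := hr
      obtain ⟨ρ', hτ, hr'⟩ := walk_psi_rev σ e ρ0 X c0 lm hc0 hlm hs0 hρ0 hS' w ρ0 rfl
      exact ⟨ρ', ConnectedComponent.eq.mpr hr'.symm, hτ.symm⟩
    · rintro ⟨ρ', hρ', rfl⟩
      have hr : (FS ((X.induce S).map e.toEmbedding) (starGraph m)).Reachable ρ' ρ0 :=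
        ConnectedComponent.eq.mp hρ'
      have := reachable_psi σ e ρ0 X c0 lm hc0 hlm hs0 hρ0 hr
      rw [psi_rho0] at this
      exact ConnectedComponent.eq.mpr this
  rw [himg, Set.ncard_image_of_injective _ (psi_injective σ e ρ0)]
end
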